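/- For n ≥ 2, the set {φ_{(1 2)}, φ_{(2 3)}, …, φ_{(n−1 n)}} ∪ {ξ_{(1,1)}, ξ_θ} of size n + 1 is an independent generating subset of the endomorphism semigroup End(B_n) of the Brandt semigroup B_n. -/
import Mathlib


/-- The underlying set of the Brandt semigroup `B_n`: pairs `(i,j)` with
`i, j ∈ [n]` together with the zero element `θ` (represented by `none`). -/
abbrev Brandt (n : ℕ) := Option (Fin n × Fin n)

/-- The Brandt semigroup operation: `(i,j) + (k,l) = (i,l)` if `j = k`, and `θ`
otherwise; `θ` is a two-sided zero. -/
def bmul {n : ℕ} : Brandt n → Brandt n → Brandt n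
  | some (i, j), some (k, l) => if j = k then some (i, l) else none
  | _, _ => none

instance {n : ℕ} : Mul (Brandt n) := ⟨bmul⟩

@[simp] lemma brandt_mul_def {n : ℕ} (x y : Brandt n) : x * y = bmul x y := rfl

/-- A map `B_n → B_n` is a (semigroup) endomorphism if it preserves the operation. -/
def IsEndo {n : ℕ} (f : Brandt n → Brandt n) : Prop :=
  ∀ x y : Brandt n, f (x * y) = f x * f y

/-- `End(B_n)`: the semigroup (indeed monoid) of endomorphisms of `B_n`.
Multiplication `f * g` is "first `f`, then `g`", the composition convention of
the paper. -/
def BrandtEnd (n : ℕ) := {f : Brandt n → Brandt n // IsEndo f}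

instance {n : ℕ} : Monoid (BrandtEnd n) where
  mul f g := ⟨g.1 ∘ f.1, fun x y =>
    (congrArg g.1 (f.2 x y)).trans (g.2 _ _)⟩
  one := ⟨id, fun _ _ => rfl⟩
  mul_assoc f g h := rfl
  one_mul f := rfl
  mul_one f := rfl

/-- The zero constant endomorphism `ξ_θ`, sending every element of `B_n` to `θ`. -/
def xiTheta (n : ℕ) : BrandtEnd n := ⟨fun _ => (none : Brandt n), fun _ _ => rfl⟩

/-- The nonzero idempotent-valued constant endomorphism `ξ_{(i,i)}`. -/
def xiDiag {n : ℕ} (i : Fin n) : BrandtEnd n :=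
  ⟨fun _ => (some (i, i) : Brandt n), fun _ _ => by simp [bmul]⟩

/-- The automorphism `φ_σ` of `B_n` induced by a permutation `σ ∈ S_n`:
`(i,j) ↦ (σ i, σ j)` and `θ ↦ θ`, viewed as an element of `End(B_n)`. -/
def phiE {n : ℕ} (σ : Equiv.Perm (Fin n)) : BrandtEnd n :=
  ⟨fun x => x.map fun p => (σ p.1, σ p.2), by
    rintro (_ | ⟨i, j⟩) (_ | ⟨k, l⟩)
    · rfl
    · rfl
    · rfl
    · rcases eq_or_ne j k with h | h
      · simp [bmul, h]
      · simp [bmul, h, σ.injective.ne h]⟩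

/-- A subset `U` of a semigroup is independent if no element of `U` lies in the
subsemigroup generated by the remaining elements of `U`. -/
def Independent {M : Type*} [Mul M] (U : Set M) : Prop :=
  ∀ a ∈ U, a ∉ Subsemigroup.closure (U \ {a})


section Helpers

variable {n : ℕ}

lemma bmul_none (x : Brandt n) : bmul x none = none := by cases x <;> rfl

lemma mul_def (f g : BrandtEnd n) : (f * g).1 = g.1 ∘ f.1 := rfl

lemma phiE_mul (σ τ : Equiv.Perm (Fin n)) : phiE σ * phiE τ = phiE (τ * σ) :=
  Subtype.ext (funext fun x => by cases x <;> rfl)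

lemma mul_xiTheta (f : BrandtEnd n) : f * xiTheta n = xiTheta n := rfl

lemma mul_xiDiag (f : BrandtEnd n) (i : Fin n) : f * xiDiag i = xiDiag i := rfl

lemma xiTheta_mul_phiE (σ : Equiv.Perm (Fin n)) : xiTheta n * phiE σ = xiTheta n := rfl

lemma xiTheta_mul_xiTheta : xiTheta n * xiTheta n = xiTheta n := rfl

lemma xiDiag_mul_phiE (i : Fin n) (σ : Equiv.Perm (Fin n)) :
    xiDiag i * phiE σ = xiDiag (σ i) := rfl

lemma phiE_injective : Function.Injective (phiE (n := n)) := by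
  intro σ τ h
  refine Equiv.ext fun i => ?_
  have := congrFun (congrArg Subtype.val h) (some (i, i))
  simp only [phiE, Option.map_some] at this
  exact ((Prod.mk.injEq _ _ _ _).mp (Option.some.inj this)).1

lemma phiE_ne_xiTheta (σ : Equiv.Perm (Fin n)) (a : Fin n) : phiE σ ≠ xiTheta n := by
  intro h
  have := congrFun (congrArg Subtype.val h) (some (a, a))
  simp [phiE, xiTheta] at this

lemma phiE_ne_xiDiag (σ : Equiv.Perm (Fin n)) (i : Fin n) : phiE σ ≠ xiDiag i := by
  intro h
  have := congrFun (congrArg Subtype.val h) none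
  simp [phiE, xiDiag] at this

lemma xiDiag_ne_xiTheta (i : Fin n) : xiDiag i ≠ xiTheta n := by
  intro h
  have := congrFun (congrArg Subtype.val h) none
  simp [xiTheta, xiDiag] at this

end Helpers

lemma classify {n : ℕ} (f : BrandtEnd n) :
    f = xiTheta n ∨ (∃ i, f = xiDiag i) ∨ (∃ σ : Equiv.Perm (Fin n), f = phiE σ) := by
  obtain ⟨F, hF⟩ := f
  have h0 : F none = bmul (F none) (F none) := hF none none
  rcases h1 : F none with _ | ⟨a, b⟩
  · -- F none = none
    rw [h1] at h0
    by_cases hz : ∀ p : Fin n × Fin n, F (some p) ≠ none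
    · -- automorphism case
      have hdiag : ∀ i : Fin n, ∃ a, F (some (i, i)) = some (a, a) := by
        intro i
        have h2 := hF (some (i, i)) (some (i, i))
        rw [show (some (i, i) : Brandt n) * some (i, i) = some (i, i) from by
          simp [bmul]] at h2
        rcases h3 : F (some (i, i)) with _ | ⟨a, b⟩
        · exact absurd h3 (hz _)
        · rw [h3] at h2
          refine ⟨a, ?_⟩
          rcases eq_or_ne b a with rfl | hba
          · rfl
          · rw [brandt_mul_def] at h2
            simp [bmul, hba] at h2
      choose g hg using hdiag
      have hginj : Function.Injective g := by
        intro i j hij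
        by_contra hne
        have h2 := hF (some (i, i)) (some (j, j))
        rw [show (some (i, i) : Brandt n) * some (j, j) = none from by
          simp [bmul, hne], h1, hg i, hg j, brandt_mul_def] at h2
        simp [bmul, hij] at h2
      have hbij := Finite.injective_iff_bijective.mp hginj
      have hoff : ∀ i j : Fin n, F (some (i, j)) = some (g i, g j) := by
        intro i j
        rcases h3 : F (some (i, j)) with _ | ⟨c, d⟩
        · exact absurd h3 (hz _)
        have e1 := hF (some (i, i)) (some (i, j))
        rw [show (some (i, i) : Brandt n) * some (i, j) = some (i, j) from by
          simp [bmul], hg i, h3, brandt_mul_def] at e1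
        have e2 := hF (some (i, j)) (some (j, j))
        rw [show (some (i, j) : Brandt n) * some (j, j) = some (i, j) from by
          simp [bmul], hg j, h3, brandt_mul_def] at e2
        rcases eq_or_ne (g i) c with hc | hc
        · rcases eq_or_ne d (g j) with hd | hd
          · rw [← hc, hd]
          · simp [bmul, hd] at e2
        · simp [bmul, hc] at e1
      refine Or.inr (Or.inr ⟨Equiv.ofBijective g hbij, Subtype.ext (funext fun x => ?_)⟩)
      cases x with
      | none => exact h1
      | some p => exact hoff p.1 p.2
    · -- zero map case
      push_neg at hz
      obtain ⟨⟨i, j⟩, hij⟩ := hz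
      have hrow : ∀ k, F (some (k, j)) = none := by
        intro k
        have h2 := hF (some (k, i)) (some (i, j))
        rw [show (some (k, i) : Brandt n) * some (i, j) = some (k, j) from by
          simp [bmul], hij] at h2
        rw [h2, brandt_mul_def, bmul_none]
      have hall : ∀ p : Fin n × Fin n, F (some p) = none := by
        rintro ⟨k, l⟩
        have h2 := hF (some (k, j)) (some (j, l))
        rw [show (some (k, j) : Brandt n) * some (j, l) = some (k, l) from by
          simp [bmul], hrow k] at h2
        rw [h2]; rfl
      refine Or.inl (Subtype.ext (funext fun x => ?_))
      cases x with
      | none => exact h1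
      | some p => exact hall p
  · -- F none = some (a, b): constant case
    rw [h1] at h0
    have hba : b = a := by
      by_contra hba
      simp [bmul, hba] at h0
    subst hba
    have hx : ∀ x, F x = some (b, b) := by
      intro x
      have h2 := hF x none
      simp only [brandt_mul_def] at h2
      rw [bmul_none, h1] at h2
      rcases h3 : F x with _ | ⟨c, d⟩ <;> rw [h3] at h2
      · simp [bmul] at h2
      · rcases eq_or_ne d b with rfl | hd
        · simp [bmul] at h2
          rw [h2]
        · simp [bmul, hd] at h2
    exact Or.inr (Or.inl ⟨b, Subtype.ext (funext hx)⟩)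

section Main

variable {m : ℕ}

/-- abbreviation for the adjacent-swap generators. -/
private def sgen (m : ℕ) (i : Fin m) : BrandtEnd (m + 1) :=
  phiE (Equiv.swap i.castSucc i.succ)

lemma swap_adj_injective :
    Function.Injective (fun i : Fin m => Equiv.swap i.castSucc i.succ) := by
  intro i j h
  have h' : Equiv.swap i.castSucc i.succ = Equiv.swap j.castSucc j.succ := h
  have h2 : (Equiv.swap j.castSucc j.succ) i.castSucc = i.succ := by
    rw [← h']; exact Equiv.swap_apply_left _ _
  rw [Equiv.swap_apply_def] at h2
  split_ifs at h2 with ha hb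
  · exact Fin.ext (by have := congrArg Fin.val ha; simpa using this)
  · have e1 := congrArg Fin.val hb
    have e2 := congrArg Fin.val h2
    simp only [Fin.coe_castSucc, Fin.val_succ] at e1 e2
    omega
  · have := congrArg Fin.val h2
    simp only [Fin.coe_castSucc, Fin.val_succ] at this
    omega

lemma sgen_injective : Function.Injective (sgen m) :=
  fun i j h => swap_adj_injective (phiE_injective h)

theorem main_aux (m : ℕ) (hm : 1 ≤ m) (T : Set (BrandtEnd (m + 1)))
    (hT : T = Set.range (sgen m) ∪ {xiDiag 0, xiTheta (m + 1)}) :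
    T.ncard = (m + 1) + 1 ∧ Independent T ∧ Subsemigroup.closure T = ⊤ := by
  subst hT
  have hdne : xiDiag (0 : Fin (m + 1)) ≠ xiTheta (m + 1) := xiDiag_ne_xiTheta 0
  have hrange_phi : ∀ x ∈ Set.range (sgen m), ∃ σ, x = phiE σ := by
    rintro _ ⟨i, rfl⟩; exact ⟨_, rfl⟩
  refine ⟨?_, ?_, ?_⟩
  · -- cardinality
    have hdisj : Disjoint (Set.range (sgen m)) {xiDiag 0, xiTheta (m + 1)} := by
      rw [Set.disjoint_left]
      rintro _ ⟨i, rfl⟩ hmem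
      rcases hmem with h | h
      · exact phiE_ne_xiDiag _ _ h
      · exact phiE_ne_xiTheta _ 0 h
    rw [Set.ncard_union_eq hdisj (Set.finite_range _) (Set.toFinite _),
      ← Set.image_univ, Set.ncard_image_of_injective _ sgen_injective,
      Set.ncard_univ, Set.ncard_pair hdne]
    simp
  · -- independence
    rintro a (⟨k, rfl⟩ | ha)
    · -- a = sgen m k
      intro hmem
      set U := (Set.range (sgen m) ∪ {xiDiag 0, xiTheta (m + 1)}) \ {sgen m k} with hU
      have hP : (∃ σ : Equiv.Perm (Fin (m + 1)),
          (∀ j : Fin (m + 1), j.val ≤ k.val ↔ (σ j).val ≤ k.val) ∧ sgen m k = phiE σ) ∨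
          sgen m k = xiTheta (m + 1) ∨ ∃ i, sgen m k = xiDiag i := by
        refine Subsemigroup.closure_induction
          (p := fun x _ => (∃ σ : Equiv.Perm (Fin (m + 1)),
            (∀ j : Fin (m + 1), j.val ≤ k.val ↔ (σ j).val ≤ k.val) ∧ x = phiE σ) ∨
            x = xiTheta (m + 1) ∨ ∃ i, x = xiDiag i) ?_ ?_ hmem
        · rintro x ⟨hx1, hx2⟩
          simp only [Set.mem_singleton_iff] at hx2
          rcases hx1 with ⟨i, rfl⟩ | hx1
          · have hik : i ≠ k := fun h => hx2 (by rw [h])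
            refine Or.inl ⟨Equiv.swap i.castSucc i.succ, fun j => ?_, rfl⟩
            have hvik : (i : ℕ) ≠ (k : ℕ) := fun h => hik (Fin.ext h)
            rw [Equiv.swap_apply_def]
            split_ifs with h1 h2
            · have := congrArg Fin.val h1
              simp only [Fin.coe_castSucc, Fin.val_succ] at this ⊢
              omega
            · have := congrArg Fin.val h2
              simp only [Fin.coe_castSucc, Fin.val_succ] at this ⊢
              omega
            · rfl
          · rcases hx1 with h | h
            · exact Or.inr (Or.inr ⟨0, h⟩)
            · exact Or.inr (Or.inl h)
        · rintro x y hx hy (⟨σ, hσ, rfl⟩ | rfl | ⟨i, rfl⟩) hPy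
          · rcases hPy with ⟨τ, hτ, rfl⟩ | rfl | ⟨i, rfl⟩
            · exact Or.inl ⟨τ * σ, fun j => (hσ j).trans (hτ (σ j)), (phiE_mul σ τ)⟩
            · exact Or.inr (Or.inl (mul_xiTheta _))
            · exact Or.inr (Or.inr ⟨i, mul_xiDiag _ i⟩)
          · rcases hPy with ⟨τ, hτ, rfl⟩ | rfl | ⟨i, rfl⟩
            · exact Or.inr (Or.inl (xiTheta_mul_phiE τ))
            · exact Or.inr (Or.inl (mul_xiTheta _))
            · exact Or.inr (Or.inr ⟨i, mul_xiDiag _ i⟩)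
          · rcases hPy with ⟨τ, hτ, rfl⟩ | rfl | ⟨j, rfl⟩
            · exact Or.inr (Or.inr ⟨τ i, xiDiag_mul_phiE i τ⟩)
            · exact Or.inr (Or.inl (mul_xiTheta _))
            · exact Or.inr (Or.inr ⟨j, mul_xiDiag _ j⟩)
      rcases hP with ⟨σ, hσ, heq⟩ | h | ⟨i, h⟩
      · have hσk : σ = Equiv.swap k.castSucc k.succ := (phiE_injective heq).symm
        have := hσ k.castSucc
        rw [hσk, Equiv.swap_apply_left] at this
        simp only [Fin.coe_castSucc, Fin.val_succ] at this
        omega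
      · exact phiE_ne_xiTheta _ 0 h
      · exact phiE_ne_xiDiag _ i h
    · rcases ha with rfl | rfl
      · -- a = xiDiag 0
        intro hmem
        have hP : (∃ σ : Equiv.Perm (Fin (m + 1)), xiDiag (0 : Fin (m+1)) = phiE σ) ∨
            xiDiag (0 : Fin (m+1)) = xiTheta (m + 1) := by
          refine Subsemigroup.closure_induction
            (p := fun x _ => (∃ σ : Equiv.Perm (Fin (m + 1)), x = phiE σ) ∨
              x = xiTheta (m + 1)) ?_ ?_ hmem
          · rintro x ⟨hx1, hx2⟩
            simp only [Set.mem_singleton_iff] at hx2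
            rcases hx1 with ⟨i, rfl⟩ | hx1
            · exact Or.inl ⟨_, rfl⟩
            · rcases hx1 with h | h
              · exact absurd h hx2
              · exact Or.inr h
          · rintro x y hx hy (⟨σ, rfl⟩ | rfl) (⟨τ, rfl⟩ | rfl)
            · exact Or.inl ⟨τ * σ, phiE_mul σ τ⟩
            · exact Or.inr (mul_xiTheta _)
            · exact Or.inr (xiTheta_mul_phiE τ)
            · exact Or.inr (mul_xiTheta _)
        rcases hP with ⟨σ, h⟩ | h
        · exact phiE_ne_xiDiag σ 0 h.symm
        · exact hdne h
      · -- a = xiTheta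
        intro hmem
        have hP : (∃ σ : Equiv.Perm (Fin (m + 1)), xiTheta (m+1) = phiE σ) ∨
            ∃ i, xiTheta (m+1) = xiDiag i := by
          refine Subsemigroup.closure_induction
            (p := fun x _ => (∃ σ : Equiv.Perm (Fin (m + 1)), x = phiE σ) ∨
              ∃ i, x = xiDiag i) ?_ ?_ hmem
          · rintro x ⟨hx1, hx2⟩
            simp only [Set.mem_singleton_iff] at hx2
            rcases hx1 with ⟨i, rfl⟩ | hx1
            · exact Or.inl ⟨_, rfl⟩
            · rcases hx1 with h | h
              · exact Or.inr ⟨0, h⟩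
              · exact absurd h hx2
          · rintro x y hx hy (⟨σ, rfl⟩ | ⟨i, rfl⟩) (⟨τ, rfl⟩ | ⟨j, rfl⟩)
            · exact Or.inl ⟨τ * σ, phiE_mul σ τ⟩
            · exact Or.inr ⟨j, mul_xiDiag _ j⟩
            · exact Or.inr ⟨τ i, xiDiag_mul_phiE i τ⟩
            · exact Or.inr ⟨j, mul_xiDiag _ j⟩
        rcases hP with ⟨σ, h⟩ | ⟨i, h⟩
        · exact phiE_ne_xiTheta σ 0 h.symm
        · exact xiDiag_ne_xiTheta i h.symm
  · -- generation
    set T := Set.range (sgen m) ∪ {xiDiag 0, xiTheta (m + 1)} with hT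
    have hmemphi : ∀ i : Fin m, sgen m i ∈ Subsemigroup.closure T :=
      fun i => Subsemigroup.subset_closure (Or.inl ⟨i, rfl⟩)
    have hM : ∀ σ : Equiv.Perm (Fin (m + 1)), phiE σ ∈ Subsemigroup.closure T := by
      set M : Submonoid (Equiv.Perm (Fin (m + 1))) :=
        { carrier := {σ | phiE σ ∈ Subsemigroup.closure T}
          mul_mem' := by
            intro a b ha hb
            simp only [Set.mem_setOf_eq] at ha hb ⊢
            rw [← phiE_mul b a]
            exact mul_mem hb ha
          one_mem' := by
            show phiE (1 : Equiv.Perm (Fin (m + 1))) ∈ Subsemigroup.closure T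
            have h1 : phiE (1 : Equiv.Perm (Fin (m + 1))) = sgen m ⟨0, hm⟩ * sgen m ⟨0, hm⟩ := by
              rw [sgen, phiE_mul, Equiv.swap_mul_self]
            rw [h1]
            exact mul_mem (hmemphi _) (hmemphi _) } with hMdef
      intro σ
      have hle : Submonoid.closure
          (Set.range fun i : Fin m => Equiv.swap i.castSucc i.succ) ≤ M :=
        Submonoid.closure_le.mpr (by rintro _ ⟨i, rfl⟩; exact hmemphi i)
      rw [Equiv.Perm.mclosure_swap_castSucc_succ] at hle
      exact hle (Submonoid.mem_top σ)
    rw [Subsemigroup.eq_top_iff']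
    intro f
    rcases classify f with rfl | ⟨i, rfl⟩ | ⟨σ, rfl⟩
    · exact Subsemigroup.subset_closure (Or.inr (Or.inr rfl))
    · have h1 : xiDiag i = xiDiag 0 * phiE (Equiv.swap 0 i) := by
        rw [xiDiag_mul_phiE, Equiv.swap_apply_left]
      rw [h1]
      exact mul_mem (Subsemigroup.subset_closure (Or.inr (Or.inl rfl))) (hM _)
    · exact hM σ

end Main

/-- For `n ≥ 2`, the set `{φ_(1 2), φ_(2 3), …, φ_(n-1 n)} ∪ {ξ_(1,1), ξ_θ}` of
size `n + 1` is an independent generating subset of `End(B_n)`. -/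
theorem explicit_independent_generating_set (n : ℕ) (hn : 2 ≤ n)
    (T : Set (BrandtEnd n))
    (hTdef : T = (Set.range fun i : Fin (n - 1) =>
        phiE (Equiv.swap (Fin.castLE (Nat.sub_le n 1) i)
          (⟨(i : ℕ) + 1, by have := i.isLt; omega⟩ : Fin n))) ∪
      {xiDiag (⟨0, by omega⟩ : Fin n), xiTheta n}) :
    T.ncard = n + 1 ∧ Independent T ∧ Subsemigroup.closure T = ⊤ := by
  obtain ⟨m, rfl⟩ : ∃ m, n = m + 1 := ⟨n - 1, by omega⟩
  have hm : 1 ≤ m := by omega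
  have hfun : (fun i : Fin (m + 1 - 1) =>
      phiE (Equiv.swap (Fin.castLE (Nat.sub_le (m + 1) 1) i)
        (⟨(i : ℕ) + 1, by have := i.isLt; omega⟩ : Fin (m + 1)))) = sgen m := by
    funext i
    have e1 : Fin.castLE (Nat.sub_le (m + 1) 1) i = Fin.castSucc i := Fin.ext rfl
    have e2 : (⟨(i : ℕ) + 1, by have := i.isLt; omega⟩ : Fin (m + 1)) = Fin.succ i :=
      Fin.ext rfl
    rw [sgen, e1, e2]
  have e0 : (⟨0, by omega⟩ : Fin (m + 1)) = 0 := Fin.ext rfl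
  refine main_aux m hm T ?_
  rw [hTdef, hfun, e0]
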